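/- arXiv:2305.14297 — 2 statements merged into one kernel-verified Lean document; each statement's English description precedes it below -/
import Mathlib

section
/- Let F^{[1]},…,F^{[N]} : ℝ^D → ℝ^D be Lipschitz continuous maps of class C³, fix y^n ∈ ℝ^D, and consider an s-stage NSARK step with coefficient functions a_{ij}^{[ν]}(h), b_j^{[ν]}(h) satisfying a_{ij}^{[ν]}(h) = O(1) and b_j^{[ν]}(h) = O(1) as h → 0⁺. Suppose that for each h in some interval (0,h₀] the stage equations possess a solution Y^{(1)}(h),…,Y^{(s)}(h). Then, as h → 0⁺: Y^{(i)}(h) = y^n + h Σ_ν ( Σ_j a_{ij}^{[ν]}(h) ) F^{[ν]}(y^n) + h² Σ_{μ,ν} ( Σ_{j,k} a_{ij}^{[μ]}(h) a_{jk}^{[ν]}(h) ) DF^{[μ]}(y^n) F^{[ν]}(y^n) + O(h³) for each i, and y^{n+1}(h) = y^n + h Σ_ν ( Σ_j b_j^{[ν]}(h) ) F^{[ν]}(y^n) + h² Σ_{μ,ν} ( Σ_{i,j} b_i^{[μ]}(h) a_{ij}^{[ν]}(h) ) DF^{[μ]}(y^n) F^{[ν]}(y^n) + O(h³), where DF^{[μ]}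 denotes the Jacobian of F^{[μ]}. -/
open Topology Asymptotics Filter Finset

/-!
The stage equations and Lipschitz continuity give the a priori bound
`‖Y - yⁿ‖ ≤ K h (1 + ‖Y - yⁿ‖)`, hence `Y⁽ʲ⁾ - yⁿ = O(h)` for small `h`. Feeding this back into
the stage equations gives `Y⁽ʲ⁾ = yⁿ + h Σ a F(yⁿ) + O(h²)`. A second-order Taylor bound
`F(Y) = F(yⁿ) + DF(yⁿ)(Y - yⁿ) + O(‖Y - yⁿ‖²)` then turns every combination
`yⁿ + h Σ r F(Y⁽ʲ⁾)` with bounded weights `r` into its second-order expansion up to `O(h³)`;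
the stages (`r = a_{i·}`) and the update (`r = b`) are two instances of this.
-/

section Taylor

variable {E G : Type*} [NormedAddCommGroup E] [NormedSpace ℝ E]
  [NormedAddCommGroup G] [NormedSpace ℝ G]

theorem ContDiffAt.isBigO_sub_sub_fderiv {f : E → G} {x : E} (hf : ContDiffAt ℝ 2 f x) :
    (fun y => f y - f x - fderiv ℝ f x (y - x)) =O[𝓝 x] fun y => ‖y - x‖ ^ 2 := by
  have hdiff : ∀ᶠ y in 𝓝 x, DifferentiableAt ℝ f y :=
    (hf.eventually (by simp)).mono fun y hy => hy.differentiableAt (by norm_num)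
  obtain ⟨C, hC0, hC⟩ :=
    ((hf.fderiv_right (m := 1) (by norm_num)).differentiableAt one_ne_zero).isBigO_sub.exists_nonneg
  obtain ⟨ε, hε, hball⟩ := Metric.eventually_nhds_iff_ball.1 (hdiff.and hC.bound)
  refine IsBigO.of_bound C ?_
  filter_upwards [Metric.ball_mem_nhds x hε] with y hy
  have hsub : Metric.closedBall x ‖y - x‖ ⊆ Metric.ball x ε :=
    Metric.closedBall_subset_ball (by simpa [dist_eq_norm] using hy)
  -- on the ball of radius `‖y - x‖` around `x`, the derivative moves by at most `C ‖y - x‖`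
  have hmvt : ‖f y - f x - fderiv ℝ f x (y - x)‖ ≤ C * ‖y - x‖ * ‖y - x‖ :=
    (convex_closedBall x ‖y - x‖).norm_image_sub_le_of_norm_fderiv_le'
      (fun z hz => (hball z (hsub hz)).1)
      (fun z hz => (hball z (hsub hz)).2.trans
        (mul_le_mul_of_nonneg_left (by simpa [dist_eq_norm] using hz) hC0))
      (Metric.mem_closedBall_self (norm_nonneg _)) (by simp [dist_eq_norm])
  rw [norm_pow, norm_norm]
  linarith

theorem ContDiffAt.isBigO_comp_sub_sub_fderiv {α : Type*} {l : Filter α} {f : E → G} {x : E}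
    (hf : ContDiffAt ℝ 2 f x) {v : α → E} {g : α → ℝ} (hg : Tendsto g l (𝓝 0))
    (hv : (fun a => v a - x) =O[l] g) :
    (fun a => f (v a) - f x - fderiv ℝ f x (v a - x)) =O[l] fun a => g a ^ 2 := by
  have hvx : Tendsto v l (𝓝 x) := tendsto_sub_nhds_zero_iff.1 (hv.trans_tendsto hg)
  exact (hf.isBigO_sub_sub_fderiv.comp_tendsto hvx).trans (hv.norm_left.pow 2)

end Taylor

theorem isBigO_of_norm_le_mul_one_add {α F : Type*} [SeminormedAddGroup F] {l : Filter α}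
    {u : α → F} {g : α → ℝ} (hg : Tendsto g l (𝓝 0)) (hu : ∀ᶠ a in l, ‖u a‖ ≤ g a * (1 + ‖u a‖)) :
    u =O[l] g := by
  refine IsBigO.of_bound 2 ?_
  filter_upwards [hu, hg.eventually (ge_mem_nhds (by norm_num : (0 : ℝ) < 1 / 2))] with a hua hga
  rw [Real.norm_eq_abs]
  nlinarith [le_abs_self (g a), norm_nonneg (u a),
    mul_le_mul_of_nonneg_right hga (norm_nonneg (u a))]

theorem exists_norm_le_mul_one_add_of_lipschitzWith {ι E G : Type*} [Finite ι]
    [SeminormedAddCommGroup E] [SeminormedAddCommGroup G] {F : ι → E → G}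
    (hF : ∀ ν, ∃ K, LipschitzWith K (F ν)) (x : E) :
    ∃ C ≥ 0, ∀ ν z, ‖F ν z‖ ≤ C * (1 + ‖z - x‖) := by
  have hC : ∀ ν, ∃ C, ∀ z, ‖F ν z‖ ≤ C * (1 + ‖z - x‖) := fun ν => by
    obtain ⟨K, hK⟩ := hF ν
    refine ⟨‖F ν x‖ + K, fun z => ?_⟩
    have := norm_le_insert' (F ν z) (F ν x)
    nlinarith [hK.norm_sub_le z x, norm_nonneg (F ν x), norm_nonneg (z - x), K.coe_nonneg]
  choose C hC using hC
  obtain ⟨M, hM⟩ := Finite.exists_le C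
  exact ⟨max M 0, le_max_right _ _, fun ν z => (hC ν z).trans
    (mul_le_mul_of_nonneg_right ((hM ν).trans (le_max_left _ _)) (by positivity))⟩

theorem smul_sum_sub_secondOrder_eq {ι κ E : Type*} [Fintype ι] [Fintype κ] [AddCommGroup E]
    [Module ℝ E] {M : Type*} [FunLike M E E] [LinearMapClass M ℝ E E] (D : κ → M) (h : ℝ) (r : ι → κ → ℝ) (a : ι → ι → κ → ℝ)
    (w : ι → κ → E) (v : κ → E) :
    h • ∑ j, ∑ μ, r j μ • w j μ - (h • ∑ μ, (∑ j, r j μ) • v μ +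
      h ^ 2 • ∑ μ, ∑ ν, (∑ j, ∑ k, r j μ * a j k ν) • D μ (v ν)) =
    h • ∑ j, ∑ μ, r j μ • (w j μ - v μ - D μ (h • ∑ k, ∑ ν, a j k ν • v ν)) := by
  simp only [map_smul, map_sum, smul_sub, sum_sub_distrib, smul_sum, sum_smul, mul_smul, sq]
  have hlin : ∑ μ, ∑ j, h • r j μ • v μ = ∑ j, ∑ μ, h • r j μ • v μ := sum_comm
  have hquad : ∑ μ, ∑ ν, ∑ j, ∑ k, h • h • r j μ • a j k ν • D μ (v ν) =
      ∑ j, ∑ μ, ∑ k, ∑ ν, h • r j μ • h • a j k ν • D μ (v ν) := calc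
    _ = ∑ μ, ∑ j, ∑ ν, ∑ k, h • h • r j μ • a j k ν • D μ (v ν) :=
      sum_congr rfl fun μ _ => sum_comm
    _ = ∑ j, ∑ μ, ∑ k, ∑ ν, h • h • r j μ • a j k ν • D μ (v ν) :=
      sum_comm.trans (sum_congr rfl fun j _ => sum_congr rfl fun μ _ => sum_comm)
    _ = _ := by simp only [smul_comm h (r _ _)]
  rw [sub_add_eq_sub_sub, hlin, hquad]

namespace NSARK

variable {E : Type*} [NormedAddCommGroup E] [NormedSpace ℝ E] {ι κ : Type*} [Fintype ι]
  [Fintype κ] {F : κ → E → E} {x : E} {A : ℝ → ι → ι → κ → ℝ} {Y : ℝ → ι → E}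

theorem stage_sub_isBigO (hF : ∀ ν, ∃ K, LipschitzWith K (F ν))
    (hA : ∀ i j ν, (fun h => A h i j ν) =O[𝓝[>] 0] fun _ => (1 : ℝ))
    (hY : ∀ᶠ h in 𝓝[>] 0, ∀ i, Y h i = x + h • ∑ j, ∑ ν, A h i j ν • F ν (Y h j)) (i : ι) :
    (fun h => Y h i - x) =O[𝓝[>] 0] fun h => h := by
  obtain ⟨C, hC0, hC⟩ := exists_norm_le_mul_one_add_of_lipschitzWith hF x
  obtain ⟨c, hc0, hc⟩ :=
    (isBigO_pi.2 fun i => isBigO_pi.2 fun j => isBigO_pi.2 (hA i j)).exists_nonneg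
  set K := Fintype.card ι * Fintype.card κ * c * C
  set u : ℝ → ι → E := fun h i => Y h i - x
  have hK : Tendsto (fun h => K * h) (𝓝[>] 0) (𝓝 0) := by
    simpa using ((continuous_const_mul K).tendsto 0).mono_left nhdsWithin_le_nhds
  suffices hu : ∀ᶠ h in 𝓝[>] 0, ‖u h‖ ≤ K * h * (1 + ‖u h‖) from
    isBigO_pi.1 ((isBigO_of_norm_le_mul_one_add hK hu).trans (isBigO_const_mul_self K _ _)) i
  filter_upwards [hY, hc.bound, self_mem_nhdsWithin] with h hYh hch (hpos : 0 < h)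
  have hA_le : ∀ i j ν, ‖A h i j ν‖ ≤ c := fun i j ν =>
    (norm_le_pi_norm (A h i j) ν).trans <| (norm_le_pi_norm (A h i) j).trans <|
      (norm_le_pi_norm (A h) i).trans (by simpa using hch)
  have hF_le : ∀ j ν, ‖F ν (Y h j)‖ ≤ C * (1 + ‖u h‖) := fun j ν =>
    (hC ν (Y h j)).trans (by gcongr; exact norm_le_pi_norm (u h) j)
  refine (pi_norm_le_iff_of_nonneg (by positivity)).2 fun i => ?_
  calc ‖u h i‖ = h * ‖∑ j, ∑ ν, A h i j ν • F ν (Y h j)‖ := by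
        rw [show u h i = _ from sub_eq_of_eq_add' (hYh i), norm_smul, Real.norm_of_nonneg hpos.le]
    _ ≤ h * ∑ j : ι, ∑ ν : κ, c * (C * (1 + ‖u h‖)) := by
        gcongr
        refine norm_sum_le_of_le _ fun j _ => norm_sum_le_of_le _ fun ν _ => ?_
        rw [norm_smul]
        exact mul_le_mul (hA_le i j ν) (hF_le j ν) (norm_nonneg _) hc0
    _ = K * h * (1 + ‖u h‖) := by
        simp only [sum_const, card_univ, nsmul_eq_mul, K]
        ring

theorem stage_sub_firstOrder_isBigO (hF : ∀ ν, ∃ K, LipschitzWith K (F ν))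
    (hA : ∀ i j ν, (fun h => A h i j ν) =O[𝓝[>] 0] fun _ => (1 : ℝ))
    (hY : ∀ᶠ h in 𝓝[>] 0, ∀ i, Y h i = x + h • ∑ j, ∑ ν, A h i j ν • F ν (Y h j)) (i : ι) :
    (fun h => Y h i - x - h • ∑ j, ∑ ν, A h i j ν • F ν x) =O[𝓝[>] 0] fun h => h ^ 2 := by
  have hFY : ∀ j ν, (fun h => F ν (Y h j) - F ν x) =O[𝓝[>] 0] fun h => h := fun j ν => by
    obtain ⟨K, hK⟩ := hF ν
    exact (IsBigO.of_bound K (.of_forall fun h => hK.norm_sub_le _ _)).trans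
      (stage_sub_isBigO hF hA hY j)
  have hsum : (fun h => ∑ j, ∑ ν, A h i j ν • (F ν (Y h j) - F ν x)) =O[𝓝[>] 0] fun h => h :=
    .fun_sum fun j _ => .fun_sum fun ν _ => by simpa using (hA i j ν).smul (hFY j ν)
  refine ((isBigO_refl (fun h : ℝ => h) _).smul hsum).congr' ?_ (.of_eq (by ext; simp [sq]))
  filter_upwards [hY] with h hYh
  rw [hYh i]
  simp only [smul_sub, sum_sub_distrib]
  abel

theorem sub_secondOrder_isBigO (hF : ∀ ν, ∃ K, LipschitzWith K (F ν))
    (hF₂ : ∀ ν, ContDiffAt ℝ 2 (F ν) x)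
    (hA : ∀ i j ν, (fun h => A h i j ν) =O[𝓝[>] 0] fun _ => (1 : ℝ))
    (hY : ∀ᶠ h in 𝓝[>] 0, ∀ i, Y h i = x + h • ∑ j, ∑ ν, A h i j ν • F ν (Y h j))
    {r : ℝ → ι → κ → ℝ} (hr : ∀ j ν, (fun h => r h j ν) =O[𝓝[>] 0] fun _ => (1 : ℝ))
    {z : ℝ → E} (hz : ∀ᶠ h in 𝓝[>] 0, z h = x + h • ∑ j, ∑ ν, r h j ν • F ν (Y h j)) :
    (fun h => z h - (x + h • ∑ ν, (∑ j, r h j ν) • F ν x +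
      h ^ 2 • ∑ μ, ∑ ν, (∑ j, ∑ k, r h j μ * A h j k ν) • fderiv ℝ (F μ) x (F ν x)))
      =O[𝓝[>] 0] fun h => h ^ 3 := by
  have hstage : ∀ j μ, (fun h => F μ (Y h j) - F μ x -
      fderiv ℝ (F μ) x (h • ∑ k, ∑ ν, A h j k ν • F ν x)) =O[𝓝[>] 0] fun h => h ^ 2 := by
    intro j μ
    have htaylor := (hF₂ μ).isBigO_comp_sub_sub_fderiv (tendsto_id.mono_left nhdsWithin_le_nhds)
      (stage_sub_isBigO hF hA hY j)
    have hlin := ((fderiv ℝ (F μ) x).isBigO_comp _ _).trans (stage_sub_firstOrder_isBigO hF hA hY j)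
    refine (htaylor.add hlin).congr (fun h => ?_) fun _ => rfl
    simp only [map_sub]
    abel
  have hsum : (fun h => ∑ j, ∑ μ, r h j μ • (F μ (Y h j) - F μ x -
      fderiv ℝ (F μ) x (h • ∑ k, ∑ ν, A h j k ν • F ν x))) =O[𝓝[>] 0] fun h => h ^ 2 :=
    .fun_sum fun j _ => .fun_sum fun μ _ => by simpa using (hr j μ).smul (hstage j μ)
  refine ((isBigO_refl (fun h : ℝ => h) _).smul hsum).congr' ?_ (.of_eq (by ext; simp [pow_succ']))
  filter_upwards [hz] with h hzh
  rw [hzh, add_assoc, add_sub_add_left_eq_sub, smul_sum_sub_secondOrder_eq]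

end NSARK

/-- Second-order Taylor expansion of the stages and update of an NSARK method
(Theorem 2.1 of Izgin–Ketcheson–Meister with k = 2). -/
theorem stmt17 (D N s : ℕ)
    (F : Fin N → (Fin D → ℝ) → (Fin D → ℝ))
    (hFL : ∀ ν, ∃ K, LipschitzWith K (F ν))
    (hFC : ∀ ν, ContDiff ℝ 3 (F ν))
    (yn : Fin D → ℝ)
    (A : ℝ → Fin s → Fin s → Fin N → ℝ) (B : ℝ → Fin s → Fin N → ℝ)
    (hA : ∀ i j ν, (fun h => A h i j ν) =O[𝓝[>] (0 : ℝ)] fun _ => (1 : ℝ))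
    (hB : ∀ j ν, (fun h => B h j ν) =O[𝓝[>] (0 : ℝ)] fun _ => (1 : ℝ))
    (Y : ℝ → Fin s → (Fin D → ℝ)) (ynext : ℝ → (Fin D → ℝ))
    (hstep : ∃ h₀ > (0 : ℝ), ∀ h ∈ Set.Ioc (0 : ℝ) h₀,
      (∀ i, Y h i = yn + h • ∑ j, ∑ ν, A h i j ν • F ν (Y h j)) ∧
      ynext h = yn + h • ∑ j, ∑ ν, B h j ν • F ν (Y h j)) :
    (∀ i, (fun h => Y h i - (yn + h • ∑ ν, (∑ j, A h i j ν) • F ν yn +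
        (h ^ 2) • ∑ μ, ∑ ν, (∑ j, ∑ k, A h i j μ * A h j k ν) •
          fderiv ℝ (F μ) yn (F ν yn)))
      =O[𝓝[>] (0 : ℝ)] fun h => h ^ 3) ∧
    ((fun h => ynext h - (yn + h • ∑ ν, (∑ j, B h j ν) • F ν yn +
        (h ^ 2) • ∑ μ, ∑ ν, (∑ i, ∑ j, B h i μ * A h i j ν) •
          fderiv ℝ (F μ) yn (F ν yn)))
      =O[𝓝[>] (0 : ℝ)] fun h => h ^ 3) := by
  obtain ⟨h₀, hh₀, hstep⟩ := hstep
  have hsmall : ∀ᶠ h in 𝓝[>] (0 : ℝ), h ∈ Set.Ioc 0 h₀ := Ioc_mem_nhdsGT hh₀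
  have hY := hsmall.mono fun h hh => (hstep h hh).1
  have hF₂ : ∀ ν, ContDiffAt ℝ 2 (F ν) yn := fun ν => ((hFC ν).of_le (by norm_num)).contDiffAt
  exact ⟨fun i => NSARK.sub_secondOrder_isBigO hFL hF₂ hA hY (hA i) (hY.mono fun h hh => hh i),
    NSARK.sub_secondOrder_isBigO hFL hF₂ hA hY hB (hsmall.mono fun h hh => (hstep h hh).2)⟩
end

section
/- Let F^{[1]},…,F^{[N]} : ℝ^D → ℝ^D be Lipschitz continuous maps of class C², fix y^n ∈ ℝ^D, and consider an s-stage NSARK step with coefficient functions a_{ij}^{[ν]}(h), b_j^{[ν]}(h) satisfying a_{ij}^{[ν]}(h) = O(1) and b_j^{[ν]}(h) = O(1) as h → 0⁺, such that for each h in some interval (0,h₀] the stage equations possess a solution. If Σ_{j=1}^s b_j^{[ν]}(h) = 1 + O(h) as h → 0⁺ for every ν = 1,…,N, then for every function u : ℝ → ℝ^D with u(0) = y^n and u'(t) = Σ_{ν=1}^N F^{[ν]}(u(t)) for all t, one has ‖y^{n+1}(h) − u(h)‖ = O(h²) as h → 0⁺; that is, the NSARK method is of order at least 1. -/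
open Topology Asymptotics Filter Finset

open scoped NNReal

/-!
With `G = ∑ ν, F ν`, the exact solution satisfies `u h = yⁿ + h • G yⁿ + O(h²)`, because
`u' = G ∘ u` differs from `G yⁿ` by `O(t)` along the solution. The stages satisfy
`Y h i = yⁿ + O(h)`: the stage equations bound `‖Y h - yⁿ‖` by `h * (a + b * ‖Y h - yⁿ‖)`, and
the second term is absorbed for small `h`. Hence `F ν (Y h j) = F ν yⁿ + O(h)`, and since the
weights are `O(1)` with `∑ j, B h j ν = 1 + O(h)`, the update is `yⁿ + h • G yⁿ + O(h²)` too.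
-/

theorem LipschitzWith.isBigO_comp_sub {α E F G : Type*} [SeminormedAddCommGroup E]
    [SeminormedAddCommGroup F] [SeminormedAddCommGroup G] {K : ℝ≥0} {f : E → F}
    (hf : LipschitzWith K f) {l : Filter α} {Y : α → E} {y : E} {g : α → G}
    (hY : (fun x => Y x - y) =O[l] g) :
    (fun x => f (Y x) - f y) =O[l] g :=
  (isBigO_of_le' (c := K) (l := l) fun x => hf.norm_sub_le (Y x) y).trans hY

section

variable {E : Type*} [NormedAddCommGroup E] [NormedSpace ℝ E] {ι σ : Type*} [Fintype ι] [Fintype σ]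

theorem exists_lipschitzWith_forall {α β : Type*} [PseudoEMetricSpace α] [PseudoEMetricSpace β]
    {f : ι → α → β} (hf : ∀ i, ∃ K, LipschitzWith K (f i)) : ∃ K, ∀ i, LipschitzWith K (f i) := by
  choose K hK using hf
  exact ⟨∑ i, K i, fun i => (hK i).weaken (single_le_sum (fun j _ => zero_le) (mem_univ i))⟩

theorem isBigO_id_of_norm_le_mul_add {F : Type*} [SeminormedAddCommGroup F] {f : ℝ → F}
    {a b : ℝ} (hf : ∀ᶠ t in 𝓝[>] 0, ‖f t‖ ≤ t * (a + b * ‖f t‖)) :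
    f =O[𝓝[>] 0] fun t => t := by
  have hsmall : ∀ᶠ t in 𝓝[>] (0 : ℝ), t * b ≤ 1 / 2 := by
    have : Tendsto (fun t : ℝ => t * b) (𝓝[>] 0) (𝓝 0) := by
      simpa using ((continuous_mul_const b).tendsto' 0 (0 * b) rfl).mono_left nhdsWithin_le_nhds
    exact this.eventually (ge_mem_nhds (by norm_num))
  refine isBigO_iff.2 ⟨2 * |a|, ?_⟩
  filter_upwards [hf, hsmall, self_mem_nhdsWithin] with t ht hb (htpos : 0 < t)
  rw [Real.norm_eq_abs, abs_of_pos htpos]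
  nlinarith [mul_nonneg (sub_nonneg.2 hb) (norm_nonneg (f t)),
    mul_nonneg htpos.le (sub_nonneg.2 (le_abs_self a))]

theorem isBigO_sub_sub_smul_of_hasDerivAt {f f' : ℝ → E}
    (hf : ∀ᶠ t in 𝓝 0, HasDerivAt f (f' t) t) (hf' : (fun t => f' t - f' 0) =O[𝓝 0] fun t => t) :
    (fun t => f t - f 0 - t • f' 0) =O[𝓝 0] fun t => t ^ 2 := by
  obtain ⟨C, hC0, hC⟩ := hf'.exists_pos
  obtain ⟨δ, hδ, hball⟩ := Metric.eventually_nhds_iff_ball.1 (hf.and hC.bound)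
  refine isBigO_iff.2 ⟨C, ?_⟩
  filter_upwards [Metric.ball_mem_nhds 0 hδ] with h hh
  have hsub : Metric.closedBall (0 : ℝ) ‖h‖ ⊆ Metric.ball 0 δ :=
    Metric.closedBall_subset_ball (by simpa using hh)
  have hderiv : ∀ x ∈ Metric.closedBall (0 : ℝ) ‖h‖,
      HasDerivWithinAt (fun t => f t - t • f' 0) (f' x - f' 0) (Metric.closedBall 0 ‖h‖) x :=
    fun x hx => ((hball x (hsub hx)).1.sub (by simpa using (hasDerivAt_id x).smul_const (f' 0)))
      |>.hasDerivWithinAt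
  have hbound : ∀ x ∈ Metric.closedBall (0 : ℝ) ‖h‖, ‖f' x - f' 0‖ ≤ C * ‖h‖ := fun x hx =>
    (hball x (hsub hx)).2.trans (by gcongr; simpa using hx)
  have := (convex_closedBall (0 : ℝ) ‖h‖).norm_image_sub_le_of_norm_hasDerivWithin_le hderiv
    hbound (Metric.mem_closedBall_self (norm_nonneg h)) (y := h) (by simp)
  calc ‖f h - f 0 - h • f' 0‖ = ‖f h - h • f' 0 - (f 0 - (0 : ℝ) • f' 0)‖ := by
        rw [zero_smul, sub_zero, sub_right_comm]
    _ ≤ C * ‖h‖ * ‖h - 0‖ := this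
    _ = C * ‖h ^ 2‖ := by rw [sub_zero, norm_pow, sq, mul_assoc]

theorem stages_sub_isBigO {F : ι → E → E} {K : ℝ≥0} (hF : ∀ ν, LipschitzWith K (F ν)) {y : E}
    {A : ℝ → σ → σ → ι → ℝ} (hA : A =O[𝓝[>] 0] fun _ => (1 : ℝ)) {Y : ℝ → σ → E}
    (hY : ∀ᶠ h in 𝓝[>] 0, ∀ i, Y h i = y + h • ∑ j, ∑ ν, A h i j ν • F ν (Y h j)) :
    (fun h i => Y h i - y) =O[𝓝[>] 0] fun h => h := by
  obtain ⟨C, hC0, hC⟩ := hA.exists_pos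
  refine isBigO_id_of_norm_le_mul_add (a := C * ∑ _j : σ, ∑ ν, ‖F ν y‖)
    (b := C * ∑ _j : σ, ∑ _ν : ι, (K : ℝ)) ?_
  filter_upwards [hY, hC.bound, self_mem_nhdsWithin] with h hYh hAh (hpos : 0 < h)
  set e := ‖fun i => Y h i - y‖
  have hcoeff : ∀ i j ν, ‖A h i j ν‖ ≤ C := fun i j ν =>
    (((norm_le_pi_norm _ ν).trans (norm_le_pi_norm _ j)).trans (norm_le_pi_norm _ i)).trans
      (by simpa using hAh)
  have hFY : ∀ j ν, ‖F ν (Y h j)‖ ≤ ‖F ν y‖ + K * e := fun j ν => calc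
    ‖F ν (Y h j)‖ ≤ ‖F ν y‖ + ‖F ν (Y h j) - F ν y‖ := norm_le_norm_add_norm_sub' _ _
    _ ≤ ‖F ν y‖ + K * ‖Y h j - y‖ := by gcongr; exact (hF ν).norm_sub_le _ _
    _ ≤ ‖F ν y‖ + K * e := by gcongr; exact norm_le_pi_norm (fun i => Y h i - y) j
  refine (pi_norm_le_iff_of_nonneg (by positivity)).2 fun i => ?_
  calc ‖Y h i - y‖ = h * ‖∑ j, ∑ ν, A h i j ν • F ν (Y h j)‖ := by
        rw [hYh i, add_sub_cancel_left, norm_smul, Real.norm_of_nonneg hpos.le]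
    _ ≤ h * ∑ j, ∑ ν, C * (‖F ν y‖ + K * e) := by
        gcongr
        refine (norm_sum_le _ _).trans (sum_le_sum fun j _ => ?_)
        refine (norm_sum_le _ _).trans (sum_le_sum fun ν _ => ?_)
        rw [norm_smul]
        exact mul_le_mul (hcoeff i j ν) (hFY j ν) (norm_nonneg _) hC0.le
    _ = h * (C * ∑ _j : σ, ∑ ν, ‖F ν y‖ + (C * ∑ _j : σ, ∑ _ν : ι, (K : ℝ)) * e) := by
        simp only [mul_add, sum_add_distrib, mul_sum, sum_mul, mul_assoc]

theorem sum_sum_smul_sub_sum_isBigO {l : Filter ℝ} {F : ι → E → E} {K : ℝ≥0}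
    (hF : ∀ ν, LipschitzWith K (F ν)) {y : E} {B : ℝ → σ → ι → ℝ} {Y : ℝ → σ → E}
    (hB : ∀ j ν, (fun h => B h j ν) =O[l] fun _ => (1 : ℝ))
    (hsum : ∀ ν, (fun h => (∑ j, B h j ν) - 1) =O[l] fun h => h)
    (hY : ∀ j, (fun h => Y h j - y) =O[l] fun h => h) :
    (fun h => ∑ j, ∑ ν, B h j ν • F ν (Y h j) - ∑ ν, F ν y) =O[l] fun h => h := by
  have hsplit : ∀ h, ∑ ν, (∑ j, B h j ν • (F ν (Y h j) - F ν y) + ((∑ j, B h j ν) - 1) • F ν y)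
      = ∑ j, ∑ ν, B h j ν • F ν (Y h j) - ∑ ν, F ν y := fun h => by
    simp only [smul_sub, sub_smul, one_smul, sum_smul, sum_sub_distrib, sum_add_distrib]
    rw [sum_comm (f := fun j ν => B h j ν • F ν (Y h j))]
    abel
  refine IsBigO.congr_left (IsBigO.fun_sum fun ν _ => IsBigO.add ?_ ?_) hsplit
  · refine IsBigO.fun_sum fun j _ => ?_
    simpa using (hB j ν).smul ((hF ν).isBigO_comp_sub (hY j))
  · simpa using (hsum ν).smul (isBigO_const_one ℝ (F ν y) l)

end

theorem stmt18_general (D N s : ℕ)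
    (F : Fin N → (Fin D → ℝ) → (Fin D → ℝ))
    (hFL : ∀ ν, ∃ K, LipschitzWith K (F ν))
    (yn : Fin D → ℝ)
    (A : ℝ → Fin s → Fin s → Fin N → ℝ) (B : ℝ → Fin s → Fin N → ℝ)
    (hA : ∀ i j ν, (fun h => A h i j ν) =O[𝓝[>] (0 : ℝ)] fun _ => (1 : ℝ))
    (hB : ∀ j ν, (fun h => B h j ν) =O[𝓝[>] (0 : ℝ)] fun _ => (1 : ℝ))
    (Y : ℝ → Fin s → (Fin D → ℝ)) (ynext : ℝ → (Fin D → ℝ))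
    (hstep : ∃ h₀ > (0 : ℝ), ∀ h ∈ Set.Ioc (0 : ℝ) h₀,
      (∀ i, Y h i = yn + h • ∑ j, ∑ ν, A h i j ν • F ν (Y h j)) ∧
      ynext h = yn + h • ∑ j, ∑ ν, B h j ν • F ν (Y h j))
    (hcond : ∀ ν, (fun h => (∑ j, B h j ν) - 1) =O[𝓝[>] (0 : ℝ)] fun h => h) :
    ∀ u : ℝ → (Fin D → ℝ), u 0 = yn →
      (∀ t, HasDerivAt u (∑ ν, F ν (u t)) t) →
      (fun h => ynext h - u h) =O[𝓝[>] (0 : ℝ)] fun h => h ^ 2 := by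
  intro u hu0 hu'
  obtain ⟨K, hK⟩ := exists_lipschitzWith_forall hFL
  obtain ⟨h₀, h₀pos, hstep⟩ := hstep
  have hstep' := eventually_of_mem (Ioc_mem_nhdsGT h₀pos) hstep
  have hY : ∀ j, (fun h => Y h j - yn) =O[𝓝[>] 0] fun h => h :=
    isBigO_pi.1 <| stages_sub_isBigO hK (isBigO_pi.2 fun i => isBigO_pi.2 fun j => isBigO_pi.2
      fun ν => hA i j ν) (hstep'.mono fun _ hh => hh.1)
  have hdefect := sum_sum_smul_sub_sum_isBigO hK hB hcond hY
  have hexact : (fun h => u h - yn - h • ∑ ν, F ν yn) =O[𝓝[>] 0] fun h => h ^ 2 := by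
    have hu0' : (fun t => u t - u 0) =O[𝓝 0] fun t => t := by simpa using (hu' 0).isBigO_sub
    have hderiv : (fun t => ∑ ν, F ν (u t) - ∑ ν, F ν (u 0)) =O[𝓝 0] fun t => t := by
      simp_rw [← sum_sub_distrib]
      exact IsBigO.fun_sum fun ν _ => (hK ν).isBigO_comp_sub hu0'
    rw [← hu0]
    exact (isBigO_sub_sub_smul_of_hasDerivAt (.of_forall hu') hderiv).mono nhdsWithin_le_nhds
  have hlocal : (fun h => h • (∑ j, ∑ ν, B h j ν • F ν (Y h j) - ∑ ν, F ν yn))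
      =O[𝓝[>] 0] fun h => h ^ 2 :=
    ((isBigO_refl (fun h : ℝ => h) _).smul hdefect).congr_right fun h => by simp [sq]
  refine (hlocal.sub hexact).congr' ?_ .rfl
  filter_upwards [hstep'] with h hh
  rw [hh.2, smul_sub]
  abel

/-- First-order sufficiency for NSARK methods (Corollary 2.2 of
Izgin–Ketcheson–Meister, p = 1, sufficiency direction): if
Σ_j b_j^{[ν]}(h) = 1 + O(h) for all ν, the NSARK method is of order at
least 1. -/
theorem stmt18 (D N s : ℕ)
    (F : Fin N → (Fin D → ℝ) → (Fin D → ℝ))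
    (hFL : ∀ ν, ∃ K, LipschitzWith K (F ν))
    (hFC : ∀ ν, ContDiff ℝ 2 (F ν))
    (yn : Fin D → ℝ)
    (A : ℝ → Fin s → Fin s → Fin N → ℝ) (B : ℝ → Fin s → Fin N → ℝ)
    (hA : ∀ i j ν, (fun h => A h i j ν) =O[𝓝[>] (0 : ℝ)] fun _ => (1 : ℝ))
    (hB : ∀ j ν, (fun h => B h j ν) =O[𝓝[>] (0 : ℝ)] fun _ => (1 : ℝ))
    (Y : ℝ → Fin s → (Fin D → ℝ)) (ynext : ℝ → (Fin D → ℝ))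
    (hstep : ∃ h₀ > (0 : ℝ), ∀ h ∈ Set.Ioc (0 : ℝ) h₀,
      (∀ i, Y h i = yn + h • ∑ j, ∑ ν, A h i j ν • F ν (Y h j)) ∧
      ynext h = yn + h • ∑ j, ∑ ν, B h j ν • F ν (Y h j))
    (hcond : ∀ ν, (fun h => (∑ j, B h j ν) - 1) =O[𝓝[>] (0 : ℝ)] fun h => h) :
    ∀ u : ℝ → (Fin D → ℝ), u 0 = yn →
      (∀ t, HasDerivAt u (∑ ν, F ν (u t)) t) →
      (fun h => ynext h - u h) =O[𝓝[>] (0 : ℝ)] fun h => h ^ 2 :=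
  stmt18_general D N s F hFL yn A B hA hB Y ynext hstep hcond
end
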